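/- Suppose F and G are differentiable functions on ℝ^d such that F is m-strongly convex, G − F is linear with gradient vector u, and f₁, f₂ are the (unique) minimizers of F and G respectively. Then ‖f₁ − f₂‖ ≤ ‖u‖/m. -/

import Mathlib

/-!
At a minimizer `x` of a uniformly convex function `f`, comparing `f x` with the values of `f` on
the segment towards `y` and letting the segment shrink shows that `f` grows at least by the
modulus: `f x + φ ‖y - x‖ ≤ f y`. Adding a linear function preserves `m`-strong convexity, so
`F` and `G = F + ⟪u, ·⟫` both grow quadratically away from their minimizers `f₁` and `f₂`. Adding
the two growth inequalities cancels `F f₁ + F f₂` and leaves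
`m ‖f₁ - f₂‖² ≤ ⟪u, f₁ - f₂⟫ ≤ ‖u‖ ‖f₁ - f₂‖`.
-/

open RealInnerProductSpace Filter Topology

section Convexity

variable {E : Type*} [NormedAddCommGroup E] [NormedSpace ℝ E] {s : Set E} {f : E → ℝ}

theorem UniformConvexOn.add_le_of_isMinOn {φ : ℝ → ℝ} (hf : UniformConvexOn s φ f) {x y : E}
    (hxs : x ∈ s) (hx : IsMinOn f s x) (hys : y ∈ s) : f x + φ ‖y - x‖ ≤ f y := by
  have hsegment : ∀ t ∈ Set.Ioo (0 : ℝ) 1, (1 - t) * φ ‖y - x‖ ≤ f y - f x := by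
    rintro t ⟨ht₀, ht₁⟩
    have hmin : f x ≤ f (t • y + (1 - t) • x) :=
      hx (hf.1 hys hxs ht₀.le (sub_nonneg.2 ht₁.le) (add_sub_cancel _ _))
    have hconv := hf.2 hys hxs ht₀.le (sub_nonneg.2 ht₁.le) (add_sub_cancel t 1)
    rw [smul_eq_mul, smul_eq_mul] at hconv
    refine le_of_mul_le_mul_left ?_ ht₀
    linarith
  have hlim : Tendsto (fun t : ℝ => (1 - t) * φ ‖y - x‖) (𝓝[>] 0) (𝓝 (φ ‖y - x‖)) := by
    have : Continuous fun t : ℝ => (1 - t) * φ ‖y - x‖ := by fun_prop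
    simpa using (this.tendsto 0).mono_left nhdsWithin_le_nhds
  have := le_of_tendsto hlim (eventually_of_mem (Ioo_mem_nhdsGT one_pos) hsegment)
  linarith

theorem StrongConvexOn.add_convexOn {m : ℝ} {g : E → ℝ} (hf : StrongConvexOn s m f)
    (hg : ConvexOn ℝ s g) : StrongConvexOn s m (f + g) := by
  have hfg := UniformConvexOn.add hf (uniformConvexOn_zero.2 hg)
  rwa [add_zero] at hfg

end Convexity

theorem norm_le_norm_div_of_mul_sq_le_inner {E : Type*} [NormedAddCommGroup E]
    [InnerProductSpace ℝ E] {m : ℝ} (hm : 0 < m) {u v : E} (h : m * ‖v‖ ^ 2 ≤ ⟪u, v⟫) :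
    ‖v‖ ≤ ‖u‖ / m := by
  rcases (norm_nonneg v).eq_or_lt with hv | hv
  · rw [← hv]
    positivity
  rw [le_div_iff₀ hm]
  refine le_of_mul_le_mul_right ?_ hv
  calc ‖v‖ * m * ‖v‖ = m * ‖v‖ ^ 2 := by ring
    _ ≤ ⟪u, v⟫ := h
    _ ≤ ‖u‖ * ‖v‖ := real_inner_le_norm u v

theorem strongly_convex_sensitivity_general (d : ℕ) (m : ℝ) (hm : 0 < m)
    (F G : EuclideanSpace ℝ (Fin d) → ℝ)
    (hF : ConvexOn ℝ Set.univ (fun f => F f - (m / 2) * ‖f‖ ^ 2))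
    (u : EuclideanSpace ℝ (Fin d))
    (hG : ∀ f, G f = F f + ⟪u, f⟫)
    (f₁ f₂ : EuclideanSpace ℝ (Fin d))
    (hf₁ : ∀ f, F f₁ ≤ F f) (hf₂ : ∀ f, G f₂ ≤ G f) :
    ‖f₁ - f₂‖ ≤ ‖u‖ / m := by
  have hFm : StrongConvexOn Set.univ m F := strongConvexOn_iff_convex.2 hF
  have hGm : StrongConvexOn Set.univ m G := by
    rw [show G = F + fun f => ⟪u, f⟫ from funext hG]
    exact hFm.add_convexOn ((innerₛₗ ℝ u).convexOn convex_univ)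
  have hF₁ : F f₁ + m / 2 * ‖f₂ - f₁‖ ^ 2 ≤ F f₂ :=
    UniformConvexOn.add_le_of_isMinOn hFm (Set.mem_univ _) (fun f _ => hf₁ f) (Set.mem_univ _)
  have hG₂ : G f₂ + m / 2 * ‖f₁ - f₂‖ ^ 2 ≤ G f₁ :=
    UniformConvexOn.add_le_of_isMinOn hGm (Set.mem_univ _) (fun f _ => hf₂ f) (Set.mem_univ _)
  refine norm_le_norm_div_of_mul_sq_le_inner hm ?_
  rw [hG, hG] at hG₂
  rw [norm_sub_rev] at hF₁
  rw [inner_sub_right]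
  linarith

theorem strongly_convex_sensitivity (d : ℕ) (m : ℝ) (hm : 0 < m)
    (F G : EuclideanSpace ℝ (Fin d) → ℝ)
    (hFdiff : Differentiable ℝ F) (hGdiff : Differentiable ℝ G)
    (hF : ConvexOn ℝ Set.univ (fun f => F f - (m / 2) * ‖f‖ ^ 2))
    (u : EuclideanSpace ℝ (Fin d))
    (hG : ∀ f, G f = F f + ⟪u, f⟫)
    (f₁ f₂ : EuclideanSpace ℝ (Fin d))
    (hf₁ : ∀ f, F f₁ ≤ F f) (hf₂ : ∀ f, G f₂ ≤ G f) :
    ‖f₁ - f₂‖ ≤ ‖u‖ / m :=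
  strongly_convex_sensitivity_general d m hm F G hF u hG f₁ f₂ hf₁ hf₂
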